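/- In the symmetric group S₉, the permutations σ₁ = (1 2 3 4 5 6 7), σ₂ = (1 7 6 2 3 8 9), σ₃ = (1 9 8 2 5 4 3) each have cycle structure [1,1,7], satisfy σ₁·σ₂·σ₃ = identity, and the subgroup they generate acts transitively on {1,…,9}. Hence there exists a transitive product-one tuple in S₉ of length 3 with ramification type [[1²,7]³]. -/
import Mathlib


/-- Cycle structure of a permutation of `Fin d`, including fixed points as 1-cycles. -/
def fullCycleType {d : ℕ} (σ : Equiv.Perm (Fin d)) : Multiset ℕ :=
  σ.cycleType + Multiset.replicate (d - σ.cycleType.sum) 1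

/-- Product of a list of permutations, composed left-to-right
(apply the first permutation first). -/
def seqProd {d : ℕ} (l : List (Equiv.Perm (Fin d))) : Equiv.Perm (Fin d) :=
  l.foldr (fun σ acc => σ.trans acc) (Equiv.refl (Fin d))


def σ1 : Equiv.Perm (Fin 9) := c[0, 1, 2, 3, 4, 5, 6]

def σ2 : Equiv.Perm (Fin 9) := c[0, 6, 5, 1, 2, 7, 8]

def σ3 : Equiv.Perm (Fin 9) := c[0, 8, 7, 1, 4, 3, 2]

lemma cycleType_σ1 : σ1.cycleType = {7} := by
  have h : σ1.IsCycle := by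
    apply Cycle.isCycle_formPerm
    rw [Cycle.nontrivial_coe_nodup_iff (by decide)]
    decide
  rw [h.cycleType]
  have : σ1.support.card = 7 := by decide
  rw [this]

lemma cycleType_σ2 : σ2.cycleType = {7} := by
  have h : σ2.IsCycle := by
    apply Cycle.isCycle_formPerm
    rw [Cycle.nontrivial_coe_nodup_iff (by decide)]
    decide
  rw [h.cycleType]
  have : σ2.support.card = 7 := by decide
  rw [this]

lemma cycleType_σ3 : σ3.cycleType = {7} := by
  have h : σ3.IsCycle := by
    apply Cycle.isCycle_formPerm
    rw [Cycle.nontrivial_coe_nodup_iff (by decide)]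
    decide
  rw [h.cycleType]
  have : σ3.support.card = 7 := by decide
  rw [this]

lemma full1 : fullCycleType σ1 = ({1, 1, 7} : Multiset ℕ) := by
  rw [fullCycleType, cycleType_σ1]; decide

lemma full2 : fullCycleType σ2 = ({1, 1, 7} : Multiset ℕ) := by
  rw [fullCycleType, cycleType_σ2]; decide

lemma full3 : fullCycleType σ3 = ({1, 1, 7} : Multiset ℕ) := by
  rw [fullCycleType, cycleType_σ3]; decide

lemma trans_aux (H : Subgroup (Equiv.Perm (Fin 9))) (h1 : σ1 ∈ H) (h2 : σ2 ∈ H) :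
    ∀ x y : Fin 9, ∃ g ∈ H, g x = y := by
  have key : ∀ x : Fin 9, ∃ g ∈ H, g 0 = x := by
    intro x
    fin_cases x
    · exact ⟨1, H.one_mem, rfl⟩
    · exact ⟨σ1, h1, by decide⟩
    · exact ⟨σ1 ^ 2, H.pow_mem h1 2, by decide⟩
    · exact ⟨σ1 ^ 3, H.pow_mem h1 3, by decide⟩
    · exact ⟨σ1 ^ 4, H.pow_mem h1 4, by decide⟩
    · exact ⟨σ1 ^ 5, H.pow_mem h1 5, by decide⟩
    · exact ⟨σ1 ^ 6, H.pow_mem h1 6, by decide⟩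
    · exact ⟨σ2 * σ1 ^ 2, H.mul_mem h2 (H.pow_mem h1 2), by decide⟩
    · exact ⟨σ2 ^ 2 * σ1 ^ 2, H.mul_mem (H.pow_mem h2 2) (H.pow_mem h1 2), by decide⟩
  intro x y
  obtain ⟨gx, hgx, hx⟩ := key x
  obtain ⟨gy, hgy, hy⟩ := key y
  refine ⟨gy * gx⁻¹, H.mul_mem hgy (H.inv_mem hgx), ?_⟩
  have : gx⁻¹ x = 0 := by rw [← hx]; simp
  simp [Equiv.Perm.mul_apply, this, hy]

theorem stmt7 :
    (fullCycleType σ1 = ({1, 1, 7} : Multiset ℕ) ∧ fullCycleType σ2 = ({1, 1, 7} : Multiset ℕ) ∧ fullCycleType σ3 = ({1, 1, 7} : Multiset ℕ)) ∧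
    seqProd [σ1, σ2, σ3] = Equiv.refl (Fin 9) ∧
    (∀ x y : Fin 9, ∃ g ∈ Subgroup.closure ({σ1, σ2, σ3} : Set (Equiv.Perm (Fin 9))), g x = y) ∧
    (∃ τ : Fin 3 → Equiv.Perm (Fin 9),
      (∀ i, fullCycleType (τ i) = ({1, 1, 7} : Multiset ℕ)) ∧
      seqProd (List.ofFn τ) = Equiv.refl (Fin 9) ∧
      (∀ x y : Fin 9, ∃ g ∈ Subgroup.closure (Set.range τ), g x = y)) := by
  refine ⟨⟨full1, full2, full3⟩, ?_, ?_, ?_⟩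
  · decide
  · apply trans_aux
    · exact Subgroup.subset_closure (by simp)
    · exact Subgroup.subset_closure (by simp)
  · refine ⟨![σ1, σ2, σ3], ?_, ?_, ?_⟩
    · intro i; fin_cases i
      · exact full1
      · exact full2
      · exact full3
    · show seqProd [σ1, σ2, σ3] = _
      decide
    · apply trans_aux
      · exact Subgroup.subset_closure ⟨0, rfl⟩
      · exact Subgroup.subset_closure ⟨1, rfl⟩
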